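/- Let G be a graph on n vertices, let H_1, …, H_k be subgraphs of pairwise edge-disjoint subgraphs B_1, …, B_k of G whose edge sets partition E(G), and suppose each H_j is an α-matching cover of B_j. Then H := H_1 ∪ ⋯ ∪ H_k satisfies μ(H[X,Y]) ≥ μ(G[X,Y]) − k·α·n for all disjoint vertex subsets X, Y; i.e., H is a (kα)-matching cover of G. -/

import Mathlib

/-!
Split a maximum matching `M` of `G[X,Y]` into the parts `M ∩ B i`. Each part is a matching of
`B i[A i, C i]`, where `A i`, `C i` are the vertices of `X`, `Y` it covers; since `M` is a
matching, the sets `A i ∪ C i` are pairwise disjoint. The cover property replaces each part by a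
matching of `H i[A i, C i]` at a loss of at most `α n`, and the replacements, living on disjoint
vertex sets, together form a matching of `(⨆ i, H i)[X,Y]`.
-/

open Finset

section Defs

variable {V : Type*}

/-- A matching in `G`: a finset of edges of `G` that are pairwise vertex-disjoint. -/
def IsMatchingSet (G : SimpleGraph V) (M : Finset (Sym2 V)) : Prop :=
  (∀ e ∈ M, e ∈ G.edgeSet) ∧
  ∀ e ∈ M, ∀ f ∈ M, e ≠ f → ∀ v : V, v ∈ e → v ∉ f

/-- The maximum matching size `μ(G)`. -/
noncomputable def matchNum (G : SimpleGraph V) : ℕ :=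
  sSup {k | ∃ M : Finset (Sym2 V), IsMatchingSet G M ∧ M.card = k}

/-- The bipartite subgraph `G[A,B]`: edges of `G` with one endpoint in `A`
and the other in `B`. -/
def biSub (G : SimpleGraph V) (A B : Finset V) : SimpleGraph V where
  Adj u v := G.Adj u v ∧ ((u ∈ A ∧ v ∈ B) ∨ (u ∈ B ∧ v ∈ A))
  symm := ⟨fun u v h =>
    ⟨h.1.symm, h.2.elim (fun hh => Or.inr ⟨hh.2, hh.1⟩) (fun hh => Or.inl ⟨hh.2, hh.1⟩)⟩⟩
  loopless := ⟨fun v h => G.loopless.irrefl v h.1⟩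

end Defs

section Matching

variable {V : Type*}

lemma IsMatchingSet.mono {G G' : SimpleGraph V} {M : Finset (Sym2 V)} (h : IsMatchingSet G M)
    (hle : G ≤ G') : IsMatchingSet G' M :=
  ⟨fun e he => SimpleGraph.edgeSet_mono hle (h.1 e he), h.2⟩

lemma IsMatchingSet.subset {G : SimpleGraph V} {M N : Finset (Sym2 V)} (h : IsMatchingSet G M)
    (hNM : N ⊆ M) : IsMatchingSet G N :=
  ⟨fun e he => h.1 e (hNM he), fun e he f hf => h.2 e (hNM he) f (hNM hf)⟩

lemma IsMatchingSet.eq_of_mem_of_mem {G : SimpleGraph V} {M : Finset (Sym2 V)}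
    (h : IsMatchingSet G M) {e f : Sym2 V} (he : e ∈ M) (hf : f ∈ M) {v : V} (hve : v ∈ e)
    (hvf : v ∈ f) : e = f :=
  by_contra fun hef => h.2 e he f hf hef v hve hvf

def PairwiseVertexDisjoint {ι : Type*} (N : ι → Finset (Sym2 V)) : Prop :=
  Pairwise fun i j => ∀ e ∈ N i, ∀ f ∈ N j, ∀ v ∈ e, v ∉ f

namespace PairwiseVertexDisjoint

variable {ι : Type*} [DecidableEq V] {N : ι → Finset (Sym2 V)}

lemma isMatchingSet_biUnion {G : SimpleGraph V} (hdisj : PairwiseVertexDisjoint N)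
    (s : Finset ι) (hN : ∀ i ∈ s, IsMatchingSet G (N i)) : IsMatchingSet G (s.biUnion N) := by
  refine ⟨fun e he => ?_, fun e he f hf hef v hve hvf => ?_⟩
  · obtain ⟨i, hi, hei⟩ := mem_biUnion.mp he
    exact (hN i hi).1 e hei
  · obtain ⟨i, hi, hei⟩ := mem_biUnion.mp he
    obtain ⟨j, -, hfj⟩ := mem_biUnion.mp hf
    obtain rfl | hij := eq_or_ne i j
    · exact (hN i hi).2 e hei f hfj hef v hve hvf
    · exact hdisj hij e hei f hfj v hve hvf

lemma card_biUnion (hdisj : PairwiseVertexDisjoint N) (s : Finset ι) :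
    (s.biUnion N).card = ∑ i ∈ s, (N i).card :=
  Finset.card_biUnion fun _ _ _ _ hij => disjoint_left.mpr fun e hei hej =>
    hdisj hij e hei e hej _ e.out_fst_mem e.out_fst_mem

end PairwiseVertexDisjoint

lemma mem_union_of_mem_edgeSet_biSub [DecidableEq V] {G : SimpleGraph V} {A C : Finset V}
    {e : Sym2 V} (he : e ∈ (biSub G A C).edgeSet) {v : V} (hv : v ∈ e) : v ∈ A ∪ C := by
  induction e using Sym2.ind with
  | _ a b =>
    obtain ⟨-, ⟨ha, hb⟩ | ⟨ha, hb⟩⟩ := he <;>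
      rcases Sym2.mem_iff.mp hv with rfl | rfl <;> simp [*]

lemma biSub_le (G : SimpleGraph V) (A C : Finset V) : biSub G A C ≤ G := fun _ _ h => h.1

lemma biSub_mono {G G' : SimpleGraph V} {A A' C C' : Finset V} (hG : G ≤ G') (hA : A ⊆ A')
    (hC : C ⊆ C') : biSub G A C ≤ biSub G' A' C' := fun _ _ ⟨hadj, h⟩ =>
  ⟨hG hadj, h.imp (And.imp (hA ·) (hC ·)) (And.imp (hC ·) (hA ·))⟩

variable [Finite V]

lemma bddAbove_matchingCards (G : SimpleGraph V) :
    BddAbove {k | ∃ M : Finset (Sym2 V), IsMatchingSet G M ∧ M.card = k} :=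
  ((Set.finite_range fun M : Finset (Sym2 V) => M.card).subset
    (by rintro _ ⟨M, -, rfl⟩; exact ⟨M, rfl⟩)).bddAbove

lemma IsMatchingSet.card_le_matchNum {G : SimpleGraph V} {M : Finset (Sym2 V)}
    (h : IsMatchingSet G M) : M.card ≤ matchNum G :=
  le_csSup (bddAbove_matchingCards G) ⟨M, h, rfl⟩

lemma exists_isMatchingSet_card_eq_matchNum (G : SimpleGraph V) :
    ∃ M : Finset (Sym2 V), IsMatchingSet G M ∧ M.card = matchNum G :=
  Nat.sSup_mem (s := {k | ∃ M : Finset (Sym2 V), IsMatchingSet G M ∧ M.card = k})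
    ⟨0, ∅, ⟨by simp, by simp⟩, card_empty⟩ (bddAbove_matchingCards G)

end Matching

section Decomposition

variable {V ι : Type*}

open Classical in
noncomputable def coveredBy (M : Finset (Sym2 V)) (S : Finset V) : Finset V :=
  S.filter fun v => ∃ e ∈ M, v ∈ e

lemma mem_coveredBy {M : Finset (Sym2 V)} {S : Finset V} {v : V} :
    v ∈ coveredBy M S ↔ v ∈ S ∧ ∃ e ∈ M, v ∈ e := by
  classical
  simp [coveredBy]

lemma coveredBy_subset (M : Finset (Sym2 V)) (S : Finset V) : coveredBy M S ⊆ S :=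
  fun _ hv => (mem_coveredBy.mp hv).1

lemma IsMatchingSet.biSub_coveredBy {G B : SimpleGraph V} {X Y : Finset V}
    {M : Finset (Sym2 V)} (h : IsMatchingSet (biSub G X Y) M) (hB : ∀ e ∈ M, e ∈ B.edgeSet) :
    IsMatchingSet (biSub B (coveredBy M X) (coveredBy M Y)) M := by
  refine ⟨fun e he => ?_, h.2⟩
  induction e using Sym2.ind with
  | _ u v =>
    have hcov : ∀ {w} {S : Finset V}, w ∈ S → w ∈ s(u, v) → w ∈ coveredBy M S :=
      fun hw hwe => mem_coveredBy.mpr ⟨hw, _, he, hwe⟩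
    obtain ⟨-, ⟨hu, hv⟩ | ⟨hu, hv⟩⟩ := h.1 _ he
    · exact ⟨hB _ he, .inl ⟨hcov hu (by simp), hcov hv (by simp)⟩⟩
    · exact ⟨hB _ he, .inr ⟨hcov hu (by simp), hcov hv (by simp)⟩⟩

variable [Finite V] [DecidableEq V] [Fintype ι]

theorem exists_matchNum_biSub_le_sum {G : SimpleGraph V} (B : ι → SimpleGraph V)
    (hBdisj : Pairwise fun i j => Disjoint (B i).edgeSet (B j).edgeSet)
    (hcover : G.edgeSet ⊆ ⋃ i, (B i).edgeSet) (X Y : Finset V) :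
    ∃ A C : ι → Finset V, (∀ i, A i ⊆ X ∧ C i ⊆ Y) ∧
      (Pairwise fun i j => Disjoint (A i ∪ C i) (A j ∪ C j)) ∧
      matchNum (biSub G X Y) ≤ ∑ i, matchNum (biSub (B i) (A i) (C i)) := by
  classical
  obtain ⟨M, hM, hMcard⟩ := exists_isMatchingSet_card_eq_matchNum (biSub G X Y)
  set P : ι → Finset (Sym2 V) := fun i => M.filter (· ∈ (B i).edgeSet)
  have hPdisj : PairwiseVertexDisjoint P := by
    intro i j hij e he f hf v hve hvf
    obtain rfl := hM.eq_of_mem_of_mem (mem_filter.mp he).1 (mem_filter.mp hf).1 hve hvf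
    exact (hBdisj hij).ne_of_mem (mem_filter.mp he).2 (mem_filter.mp hf).2 rfl
  have hMP : M = univ.biUnion P := by
    ext e
    simp only [P, mem_biUnion, mem_univ, true_and, mem_filter]
    refine ⟨fun he => ?_, fun ⟨_, he, _⟩ => he⟩
    have heG : e ∈ G.edgeSet := SimpleGraph.edgeSet_mono (biSub_le G X Y) (hM.1 e he)
    obtain ⟨i, hi⟩ := Set.mem_iUnion.mp (hcover heG)
    exact ⟨i, he, hi⟩
  refine ⟨fun i => coveredBy (P i) X, fun i => coveredBy (P i) Y,
    fun i => ⟨coveredBy_subset _ _, coveredBy_subset _ _⟩, ?_, ?_⟩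
  · have hcov : ∀ {l v}, v ∈ coveredBy (P l) X ∪ coveredBy (P l) Y → ∃ e ∈ P l, v ∈ e :=
      fun hv => (mem_union.mp hv).elim (mem_coveredBy.mp · |>.2) (mem_coveredBy.mp · |>.2)
    intro i j hij
    refine disjoint_left.mpr fun v hvi hvj => ?_
    obtain ⟨e, he, hve⟩ := hcov hvi
    obtain ⟨f, hf, hvf⟩ := hcov hvj
    exact hPdisj hij e he f hf v hve hvf
  · calc matchNum (biSub G X Y) = ∑ i, (P i).card := by
          rw [← hMcard, hMP, hPdisj.card_biUnion]
      _ ≤ ∑ i, matchNum (biSub (B i) (coveredBy (P i) X) (coveredBy (P i) Y)) :=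
          sum_le_sum fun i _ => (hM.subset (filter_subset _ _)).biSub_coveredBy
            (fun _ he => (mem_filter.mp he).2) |>.card_le_matchNum

theorem sum_matchNum_biSub_le_matchNum_biSub_iSup (H : ι → SimpleGraph V)
    {X Y : Finset V} {A C : ι → Finset V} (hA : ∀ i, A i ⊆ X) (hC : ∀ i, C i ⊆ Y)
    (hdisj : Pairwise fun i j => Disjoint (A i ∪ C i) (A j ∪ C j)) :
    ∑ i, matchNum (biSub (H i) (A i) (C i)) ≤ matchNum (biSub (⨆ i, H i) X Y) := by
  choose N hN hNcard using fun i =>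
    exists_isMatchingSet_card_eq_matchNum (biSub (H i) (A i) (C i))
  have hNdisj : PairwiseVertexDisjoint N :=
    fun i j hij e he f hf v hve hvf => disjoint_left.mp (hdisj hij)
      (mem_union_of_mem_edgeSet_biSub ((hN i).1 e he) hve)
      (mem_union_of_mem_edgeSet_biSub ((hN j).1 f hf) hvf)
  have hmatch : IsMatchingSet (biSub (⨆ i, H i) X Y) (univ.biUnion N) :=
    hNdisj.isMatchingSet_biUnion _
      fun i _ => (hN i).mono (biSub_mono (le_iSup H i) (hA i) (hC i))
  calc ∑ i, matchNum (biSub (H i) (A i) (C i)) = (univ.biUnion N).card := by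
        rw [hNdisj.card_biUnion]
        exact sum_congr rfl fun i _ => (hNcard i).symm
    _ ≤ _ := hmatch.card_le_matchNum

end Decomposition

theorem stmt_12_general {V : Type*} [Fintype V] (G : SimpleGraph V) (k : ℕ)
    (B H : Fin k → SimpleGraph V) (α : ℝ)
    (hBdisj : ∀ i j, i ≠ j → Disjoint (B i).edgeSet (B j).edgeSet)
    (hBpart : (⋃ i, (B i).edgeSet) = G.edgeSet)
    (hcov : ∀ i, ∀ A C : Finset V, Disjoint A C →
      (matchNum (biSub (H i) A C) : ℝ) ≥
        (matchNum (biSub (B i) A C) : ℝ) - α * Fintype.card V) :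
    ∀ X Y : Finset V, Disjoint X Y →
      (matchNum (biSub (⨆ i, H i) X Y) : ℝ) ≥
        (matchNum (biSub G X Y) : ℝ) - k * α * Fintype.card V := by
  classical
  intro X Y hXY
  obtain ⟨A, C, hAC, hdisj, hGB⟩ :=
    exists_matchNum_biSub_le_sum B (fun i j => hBdisj i j) hBpart.ge X Y
  rw [ge_iff_le]
  calc (matchNum (biSub G X Y) : ℝ) - k * α * Fintype.card V
      ≤ ∑ i, ((matchNum (biSub (B i) (A i) (C i)) : ℝ) - α * Fintype.card V) := by
        simp only [sum_sub_distrib, sum_const, card_univ, Fintype.card_fin, nsmul_eq_mul, mul_assoc]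
        gcongr
        exact_mod_cast hGB
    _ ≤ ∑ i, (matchNum (biSub (H i) (A i) (C i)) : ℝ) :=
        sum_le_sum fun i _ => hcov i _ _ (hXY.mono (hAC i).1 (hAC i).2)
    _ ≤ matchNum (biSub (⨆ i, H i) X Y) := by
        exact_mod_cast sum_matchNum_biSub_le_matchNum_biSub_iSup H (fun i => (hAC i).1)
          (fun i => (hAC i).2) hdisj

/-- If the edge set of `G` is partitioned into edge-disjoint subgraphs `B i`, and each
`H i ≤ B i` is an `α`-matching cover of `B i`, then the union of the `H i` is a
`k·α`-matching cover of `G`. -/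
theorem stmt_12 {V : Type*} [Fintype V] (G : SimpleGraph V) (k : ℕ)
    (B H : Fin k → SimpleGraph V) (α : ℝ)
    (hBdisj : ∀ i j, i ≠ j → Disjoint (B i).edgeSet (B j).edgeSet)
    (hBpart : (⋃ i, (B i).edgeSet) = G.edgeSet)
    (hH : ∀ i, H i ≤ B i)
    (hcov : ∀ i, ∀ A C : Finset V, Disjoint A C →
      (matchNum (biSub (H i) A C) : ℝ) ≥
        (matchNum (biSub (B i) A C) : ℝ) - α * Fintype.card V) :
    ∀ X Y : Finset V, Disjoint X Y →
      (matchNum (biSub (⨆ i, H i) X Y) : ℝ) ≥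
        (matchNum (biSub G X Y) : ℝ) - k * α * Fintype.card V :=
  stmt_12_general G k B H α hBdisj hBpart hcov
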